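/- Let r₀ > 0 and let 0 ≤ ρ ∈ L¹(ℝ) with ∫_ℝ ρ = N ∈ ℕ satisfy ∫_{[x, x+r₀)} ρ ≤ 1 for all x ∈ ℝ. Then there exists a symmetric Borel probability measure ℙ on ℝ^N whose one-body density equals ρ and such that, ℙ-almost everywhere, |x_j − x_k| ≥ r₀ for all 1 ≤ j < k ≤ N. In particular, ρ is representable with zero energy for the hard-core potential w_{r₀}(x) = (+∞)·𝟙(|x| < r₀). -/

import Mathlib

open MeasureTheory Filter
open scoped ENNReal BigOperators

noncomputable section

/-- `ℝ^d` with its Euclidean structure. -/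
abbrev Pt (d : ℕ) := EuclideanSpace ℝ (Fin d)

namespace ClDFT

/-- Positive part of an extended real number, as an element of `ℝ≥0∞`. -/
def erealPos (a : EReal) : ℝ≥0∞ := if a = ⊤ then ⊤ else ENNReal.ofReal a.toReal

variable {E : Type*} [NormedAddCommGroup E] [MeasureSpace E]
  [SigmaFinite (volume : Measure E)]

/-- The pairwise interaction `∑_{1 ≤ j < k ≤ N} w(x_j - x_k)`, valued in `EReal`. -/
def pairSum (w : E → EReal) (N : ℕ) (x : Fin N → E) : EReal :=
  ∑ p ∈ Finset.univ.filter (fun p : Fin N × Fin N => p.1 < p.2), w (x p.1 - x p.2)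

/-- Extended-real integral of an extended-real valued function (positive part minus
negative part, both computed as lower Lebesgue integrals). -/
def eIntegral {X : Type*} [MeasurableSpace X] (μ : Measure X) (f : X → EReal) : EReal :=
  ((∫⁻ x, erealPos (f x) ∂μ : ℝ≥0∞) : EReal) -
    ((∫⁻ x, erealPos (-(f x)) ∂μ : ℝ≥0∞) : EReal)

/-- Extended-real integral of a real valued function. -/
def realEIntegral {X : Type*} [MeasurableSpace X] (μ : Measure X) (f : X → ℝ) : EReal :=
  ((∫⁻ x, ENNReal.ofReal (f x) ∂μ : ℝ≥0∞) : EReal) -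
    ((∫⁻ x, ENNReal.ofReal (-(f x)) ∂μ : ℝ≥0∞) : EReal)

/-- A measure on `E^N` is symmetric if it is invariant under permutations of
the `N` coordinates. -/
def SymmetricState {N : ℕ} (P : Measure (Fin N → E)) : Prop :=
  ∀ σ : Equiv.Perm (Fin N), Measure.map (fun x => x ∘ σ) P = P

/-- The one-body density of `P` (the sum of the `N` marginals; for a symmetric state
this is `N` times the first marginal) is (absolutely continuous with) density `ρ`. -/
def HasOneBodyDensity {N : ℕ} (P : Measure (Fin N → E)) (ρ : E → ℝ) : Prop :=
  ∀ A : Set E, MeasurableSet A →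
    ∑ i : Fin N, P {x | x i ∈ A} = ∫⁻ y in A, ENNReal.ofReal (ρ y)

/-- Interaction energy `U_N(P) = ∫ ∑_{j<k} w(x_j-x_k) dP`. -/
def interactionEnergy (w : E → EReal) (N : ℕ) (P : Measure (Fin N → E)) : EReal :=
  eIntegral P (pairSum w N)

/-- Minus the entropy, `-S_N(P) = ∫ P log(N! P)`, equal to `⊤` when `P` is not
absolutely continuous with respect to Lebesgue measure. -/
def negEntropy (N : ℕ) (P : Measure (Fin N → E)) : EReal :=
  sInf { e : EReal | ∃ f : (Fin N → E) → ℝ, Measurable f ∧ (∀ x, 0 ≤ f x) ∧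
      P = volume.withDensity (fun x => ENNReal.ofReal (f x)) ∧
      e = realEIntegral volume (fun x => f x * Real.log (N.factorial * f x)) }

/-- Free energy `F_T(P) = U_N(P) - T S_N(P)`. -/
def freeEnergy (w : E → EReal) (T : ℝ) (N : ℕ) (P : Measure (Fin N → E)) : EReal :=
  interactionEnergy w N P + (T : EReal) * negEntropy N P

/-- Canonical free energy at fixed one-body density,
`F_T[ρ] = inf { F_T(P) : ρ_P = ρ }`. -/
def canFreeEnergy (w : E → EReal) (T : ℝ) (N : ℕ) (ρ : E → ℝ) : EReal :=
  sInf { e : EReal | ∃ P : Measure (Fin N → E), IsProbabilityMeasure P ∧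
     SymmetricState P ∧ HasOneBodyDensity P ρ ∧ e = freeEnergy w T N P }

/-- Zero-temperature canonical energy at fixed one-body density,
`F_0[ρ] = inf { U_N(P) : ρ_P = ρ }`. -/
def canEnergy0 (w : E → EReal) (N : ℕ) (ρ : E → ℝ) : EReal :=
  sInf { e : EReal | ∃ P : Measure (Fin N → E), IsProbabilityMeasure P ∧
     SymmetricState P ∧ HasOneBodyDensity P ρ ∧ e = interactionEnergy w N P }

/-- Assumption (A) on the interaction potential `w`, with a finite exponent
`0 ≤ α < ∞` at the origin: `w` is even, lower semicontinuous, stable with constant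
`κ > 0`, and `w(x) ≤ κ(𝟙(|x|<r₀)(r₀/|x|)^α + 1/(1+|x|^s))` with `s > d`.  The core
term is interpreted in `ℝ≥0∞`, so that it equals `+∞` at `x = 0` when `α > 0`. -/
structure AssumptionA (d : ℕ) (w : E → EReal) (κ r₀ α s : ℝ) : Prop where
  even : ∀ x : E, w (-x) = w x
  lsc : LowerSemicontinuous w
  κ_pos : 0 < κ
  stable : ∀ (N : ℕ) (x : Fin N → E), ((-(κ * N) : ℝ) : EReal) ≤ pairSum w N x
  r₀_nonneg : 0 ≤ r₀
  α_nonneg : 0 ≤ α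
  s_gt : (d : ℝ) < s
  upper : ∀ x : E, w x ≤ ((κ : ℝ) : EReal) *
    ((((if ‖x‖ < r₀ then (ENNReal.ofReal r₀ / ENNReal.ofReal ‖x‖) ^ α else 0)
      + ENNReal.ofReal (1 / (1 + ‖x‖ ^ s)) : ℝ≥0∞)) : EReal)

/-- Assumption (A) with a hard core (`α = ∞`) of range `r₀ > 0`: the upper regularity
bound only constrains `w` outside the ball of radius `r₀`, where it reads
`w(x) ≤ κ/(1+|x|^s)`. -/
structure AssumptionAHard (d : ℕ) (w : E → EReal) (κ r₀ s : ℝ) : Prop where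
  even : ∀ x : E, w (-x) = w x
  lsc : LowerSemicontinuous w
  κ_pos : 0 < κ
  stable : ∀ (N : ℕ) (x : Fin N → E), ((-(κ * N) : ℝ) : EReal) ≤ pairSum w N x
  r₀_pos : 0 < r₀
  s_gt : (d : ℝ) < s
  upper : ∀ x : E, r₀ ≤ ‖x‖ → w x ≤ ((κ * (1 / (1 + ‖x‖ ^ s)) : ℝ) : EReal)

/-- A grand-canonical state: a family of symmetric positive measures `P_n` on `E^n`
with total mass one. -/
structure GCState (E : Type*) [NormedAddCommGroup E] [MeasureSpace E] where
  meas : ∀ n : ℕ, Measure (Fin n → E)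
  symm : ∀ n, SymmetricState (meas n)
  total : ∑' n : ℕ, meas n Set.univ = 1

/-- The one-body density of a grand-canonical state is `ρ`. -/
def GCHasDensity (P : GCState E) (ρ : E → ℝ) : Prop :=
  ∀ A : Set E, MeasurableSet A →
    ∑' n : ℕ, ∑ i : Fin n, P.meas n {x | x i ∈ A} = ∫⁻ y in A, ENNReal.ofReal (ρ y)

/-- Grand-canonical interaction energy `U(P) = ∑_n ∫ ∑_{j<k} w(x_j-x_k) dP_n`. -/
def gcInteraction (w : E → EReal) (P : GCState E) : EReal :=
  ((∑' n : ℕ, ∫⁻ x, erealPos (pairSum w n x) ∂P.meas n : ℝ≥0∞) : EReal) -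
    ((∑' n : ℕ, ∫⁻ x, erealPos (-(pairSum w n x)) ∂P.meas n : ℝ≥0∞) : EReal)

/-- Minus the grand-canonical entropy, `-S(P) = ∑_{n≥0} ∫ P_n log(n! P_n)`
(the `n = 0` term giving `P₀ log P₀`), equal to `⊤` if some `P_n` is not absolutely
continuous with respect to Lebesgue measure. -/
def gcNegEntropy (P : GCState E) : EReal :=
  sInf { e : EReal | ∃ f : ∀ n : ℕ, (Fin n → E) → ℝ,
    (∀ n, Measurable (f n)) ∧ (∀ n x, 0 ≤ f n x) ∧
    (∀ n, P.meas n = volume.withDensity (fun x => ENNReal.ofReal (f n x))) ∧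
    e = ((∑' n : ℕ, ∫⁻ x, ENNReal.ofReal (f n x * Real.log (n.factorial * f n x)) : ℝ≥0∞) : EReal)
      - ((∑' n : ℕ, ∫⁻ x, ENNReal.ofReal (-(f n x * Real.log (n.factorial * f n x))) : ℝ≥0∞) : EReal) }

/-- Grand-canonical free energy `G_T(P) = U(P) - T S(P)`. -/
def gcFreeEnergy (w : E → EReal) (T : ℝ) (P : GCState E) : EReal :=
  gcInteraction w P + (T : EReal) * gcNegEntropy P

/-- Grand-canonical free energy at fixed density `G_T[ρ] = inf { G_T(P) : ρ_P = ρ }`. -/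
def gcFreeEnergyAt (w : E → EReal) (T : ℝ) (ρ : E → ℝ) : EReal :=
  sInf { e : EReal | ∃ P : GCState E, GCHasDensity P ρ ∧ e = gcFreeEnergy w T P }

/-- The local radius `R(x)`: the largest `R` with `∫_{B(x,R)} ρ = 1`. -/
def localRadius (ρ : E → ℝ) (x : E) : ℝ :=
  sSup { r : ℝ | ∫ y in Metric.ball x r, ρ y = 1 }

/-- `R_ρ = min_{x} R(x)`. -/
def minRadius (ρ : E → ℝ) : ℝ := sInf (Set.range (localRadius ρ))

end ClDFT

open ClDFT

/-!
Let `F` be the cumulative distribution function of `ρ` and `F⁻¹` its quantile function.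
For `t` uniform on `(0, 1)`, put the particles at `F⁻¹(t), F⁻¹(t + 1), …, F⁻¹(t + N - 1)`.
Since `F⁻¹` pushes Lebesgue measure on `(0, N)` forward to `ρ dx`, the one-body density is `ρ`.
The window condition gives `F(F⁻¹(s) + r₀) ≤ s + 1`, so `F⁻¹(s + 1) ≥ F⁻¹(s) + r₀` unless
`F` takes the value `s + 1` at a rational point, which happens for countably many `s` only;
hence consecutive particles are `r₀` apart almost surely. Averaging over permutations of the
coordinates makes the state symmetric without affecting the one-body density or the separation.
-/

namespace ClDFT

open Set Filter Topology

section Quantile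

variable {ρ : ℝ → ℝ}

def cumDist (ρ : ℝ → ℝ) (x : ℝ) : ℝ := ∫ y in Iic x, ρ y

/-- Only meaningful for `0 < s < ∫ ρ`: otherwise the set is empty or unbounded below and
`sInf` returns a junk value. -/
def quantile (ρ : ℝ → ℝ) (s : ℝ) : ℝ := sInf {x | s ≤ cumDist ρ x}

lemma monotone_cumDist (hρ : 0 ≤ᵐ[volume] ρ) (hint : Integrable ρ) : Monotone (cumDist ρ) :=
  fun _ _ hab => setIntegral_mono_set hint.integrableOn (ae_restrict_of_ae hρ)
    (Iic_subset_Iic.2 hab).eventuallyLE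

lemma cumDist_le_integral (hρ : 0 ≤ᵐ[volume] ρ) (hint : Integrable ρ) (x : ℝ) :
    cumDist ρ x ≤ ∫ y, ρ y :=
  setIntegral_le_integral hint hρ

lemma cumDist_sub_cumDist (hint : Integrable ρ) (a b : ℝ) :
    cumDist ρ b - cumDist ρ a = ∫ y in a..b, ρ y :=
  intervalIntegral.integral_Iic_sub_Iic hint.integrableOn hint.integrableOn

lemma continuous_cumDist (hint : Integrable ρ) : Continuous (cumDist ρ) := by
  have h : cumDist ρ = fun x => cumDist ρ 0 + ∫ y in (0 : ℝ)..x, ρ y := by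
    funext x
    rw [← cumDist_sub_cumDist hint]
    ring
  rw [h]
  exact continuous_const.add (hint.continuous_primitive 0)

lemma tendsto_cumDist_atTop (hint : Integrable ρ) :
    Tendsto (cumDist ρ) atTop (𝓝 (∫ y, ρ y)) := by
  have h := tendsto_setIntegral_of_monotone (μ := volume) (f := ρ) (s := Iic)
    (fun _ => measurableSet_Iic)
    (fun _ _ hab => Iic_subset_Iic.2 hab) (by rw [iUnion_Iic]; exact hint.integrableOn)
  rwa [iUnion_Iic, setIntegral_univ] at h

lemma tendsto_cumDist_atBot : Tendsto (cumDist ρ) atBot (𝓝 0) :=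
  tendsto_integral_Iic_zero tendsto_id

lemma cumDist_add_le_of_window (hρ : 0 ≤ᵐ[volume] ρ) (hint : Integrable ρ) {r : ℝ}
    (hwin : ∀ x, ∫ y in Ico x (x + r), ρ y ≤ 1) (x : ℝ) :
    cumDist ρ (x + r) ≤ cumDist ρ x + 1 := by
  rcases lt_or_ge r 0 with hr | hr
  · linarith [monotone_cumDist hρ hint (by linarith : x + r ≤ x)]
  have h : cumDist ρ (x + r) - cumDist ρ x = ∫ y in Ico x (x + r), ρ y := by
    rw [cumDist_sub_cumDist hint, intervalIntegral.integral_of_le (by linarith)]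
    exact setIntegral_congr_set (Ioc_ae_eq_Icc.trans Ico_ae_eq_Icc.symm)
  linarith [hwin x]

variable {s : ℝ}

lemma bddBelow_setOf_le_cumDist (hs : 0 < s) : BddBelow {x | s ≤ cumDist ρ x} := by
  obtain ⟨a, ha⟩ := eventually_atBot.1 (tendsto_cumDist_atBot.eventually_lt_const hs)
  exact ⟨a, fun x hx => le_of_not_gt fun hxa => (ha x hxa.le).not_ge hx⟩

lemma cumDist_quantile (hint : Integrable ρ) (hs : s ∈ Ioo 0 (∫ y, ρ y)) :
    cumDist ρ (quantile ρ s) = s := by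
  have hbdd := bddBelow_setOf_le_cumDist (ρ := ρ) hs.1
  have hF := continuous_cumDist hint
  refine le_antisymm ?_ ?_
  · refine le_of_tendsto
      ((hF.tendsto _).mono_left (nhdsWithin_le_nhds (s := Iio (quantile ρ s)))) ?_
    exact eventually_nhdsWithin_of_forall fun x hx =>
      (not_le.1 (notMem_of_lt_csInf (s := {x | s ≤ cumDist ρ x}) hx hbdd)).le
  · exact (isClosed_le continuous_const hF).csInf_mem
      ((tendsto_cumDist_atTop hint).eventually_const_le hs.2).exists hbdd

lemma quantile_le_iff (hρ : 0 ≤ᵐ[volume] ρ) (hint : Integrable ρ)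
    (hs : s ∈ Ioo 0 (∫ y, ρ y)) {x : ℝ} : quantile ρ s ≤ x ↔ s ≤ cumDist ρ x :=
  ⟨fun h => cumDist_quantile hint hs ▸ monotone_cumDist hρ hint h,
    fun h => csInf_le (bddBelow_setOf_le_cumDist hs.1) h⟩

lemma monotoneOn_quantile (hρ : 0 ≤ᵐ[volume] ρ) (hint : Integrable ρ) :
    MonotoneOn (quantile ρ) (Ioo 0 (∫ y, ρ y)) := fun s hs _ ht hst =>
  (quantile_le_iff hρ hint hs).2 (by rwa [cumDist_quantile hint ht])

lemma map_quantile (hρ : 0 ≤ᵐ[volume] ρ) (hint : Integrable ρ) :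
    (volume.restrict (Ioo 0 (∫ y, ρ y))).map (quantile ρ)
      = volume.withDensity fun y => ENNReal.ofReal (ρ y) := by
  have hT := aemeasurable_restrict_of_monotoneOn (μ := volume) measurableSet_Ioo
    (monotoneOn_quantile hρ hint)
  refine Measure.ext_of_Iic _ _ fun x => ?_
  have hpre : quantile ρ ⁻¹' Iic x ∩ Ioo 0 (∫ y, ρ y)
      = Iic (cumDist ρ x) ∩ Ioo 0 (∫ y, ρ y) := by
    ext s
    exact and_congr_left fun hs => quantile_le_iff hρ hint hs
  have hvol : volume (Iic (cumDist ρ x) ∩ Ioo 0 (∫ y, ρ y)) = ENNReal.ofReal (cumDist ρ x) := by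
    refine le_antisymm ?_ ?_
    · calc _ ≤ volume (Icc 0 (cumDist ρ x)) := measure_mono fun s hs => ⟨hs.2.1.le, hs.1⟩
        _ = _ := by simp
    · calc ENNReal.ofReal (cumDist ρ x) = volume (Ioo 0 (cumDist ρ x)) := by simp
        _ ≤ volume (Iic (cumDist ρ x) ∩ Ioo 0 (∫ y, ρ y)) := measure_mono fun s hs =>
          ⟨hs.2.le, hs.1, hs.2.trans_le (cumDist_le_integral hρ hint x)⟩
  rw [Measure.map_apply_of_aemeasurable hT measurableSet_Iic,
    Measure.restrict_apply' measurableSet_Ioo, hpre, hvol, withDensity_apply _ measurableSet_Iic,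
    ← ofReal_integral_eq_lintegral_ofReal hint.integrableOn (ae_restrict_of_ae hρ)]
  rfl

/-- A gap `F⁻¹(s + 1) < F⁻¹(s) + r` forces `F = s + 1` at a rational point between
`F⁻¹(s + 1)` and `F⁻¹(s) + r`, so it happens for countably many `s` only. -/
lemma countable_setOf_quantile_gap (hρ : 0 ≤ᵐ[volume] ρ) (hint : Integrable ρ) {r : ℝ}
    (hwin : ∀ x, ∫ y in Ico x (x + r), ρ y ≤ 1) :
    {s | s ∈ Ioo 0 ((∫ y, ρ y) - 1) ∧ quantile ρ (s + 1) < quantile ρ s + r}.Countable := by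
  refine (countable_range fun q : ℚ => cumDist ρ q - 1).mono ?_
  rintro s ⟨⟨hs0, hs1⟩, hgap⟩
  have hs : s ∈ Ioo 0 (∫ y, ρ y) := ⟨hs0, by linarith⟩
  have hs' : s + 1 ∈ Ioo 0 (∫ y, ρ y) := ⟨by linarith, by linarith⟩
  obtain ⟨q, hq1, hq2⟩ := exists_rat_btwn hgap
  have hupper := (monotone_cumDist hρ hint hq2.le).trans
    (cumDist_add_le_of_window hρ hint hwin (quantile ρ s))
  have hlower := monotone_cumDist hρ hint hq1.le
  rw [cumDist_quantile hint hs] at hupper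
  rw [cumDist_quantile hint hs'] at hlower
  exact ⟨q, by linarith⟩

end Quantile

section Symmetrization

variable {E : Type*} [MeasureSpace E] {N : ℕ}

def symmetrize (P : Measure (Fin N → E)) : Measure (Fin N → E) :=
  (N.factorial : ℝ≥0∞)⁻¹ • ∑ σ : Equiv.Perm (Fin N), P.map fun x => x ∘ σ

lemma measurable_comp_perm (σ : Equiv.Perm (Fin N)) :
    Measurable fun x : Fin N → E => x ∘ σ :=
  measurable_pi_lambda _ fun i => measurable_pi_apply (σ i)

variable {P : Measure (Fin N → E)}

lemma symmetrize_apply {A : Set (Fin N → E)} (hA : MeasurableSet A) :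
    symmetrize P A = (N.factorial : ℝ≥0∞)⁻¹ * ∑ σ : Equiv.Perm (Fin N), P ((· ∘ σ) ⁻¹' A) := by
  simp only [symmetrize, Measure.smul_apply, Measure.finsetSum_apply, smul_eq_mul,
    Measure.map_apply (measurable_comp_perm _) hA]

lemma factorial_inv_mul_sum_const (c : ℝ≥0∞) :
    (N.factorial : ℝ≥0∞)⁻¹ * ∑ _σ : Equiv.Perm (Fin N), c = c := by
  rw [Finset.sum_const, Finset.card_univ, Fintype.card_perm, Fintype.card_fin, nsmul_eq_mul,
    ← mul_assoc, ENNReal.inv_mul_cancel (by simp [Nat.factorial_ne_zero]) (by simp), one_mul]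

instance [IsProbabilityMeasure P] : IsProbabilityMeasure (symmetrize P) :=
  ⟨by simp only [symmetrize_apply MeasurableSet.univ, preimage_univ, measure_univ,
    factorial_inv_mul_sum_const]⟩

lemma symmetricState_symmetrize (P : Measure (Fin N → E)) : SymmetricState (symmetrize P) :=
  fun τ => by
    ext A hA
    rw [Measure.map_apply (measurable_comp_perm τ) hA, symmetrize_apply hA,
      symmetrize_apply (measurable_comp_perm τ hA)]
    congr 1
    exact Fintype.sum_equiv (Equiv.mulRight τ) _ _ fun σ => rfl

lemma sum_symmetrize_marginal {A : Set E} (hA : MeasurableSet A) :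
    ∑ i : Fin N, symmetrize P {x | x i ∈ A} = ∑ i : Fin N, P {x | x i ∈ A} := by
  rw [Finset.sum_congr rfl fun i _ =>
      symmetrize_apply (P := P) (A := {x | x i ∈ A}) (measurable_pi_apply i hA),
    ← Finset.mul_sum, Finset.sum_comm]
  calc _ = (N.factorial : ℝ≥0∞)⁻¹ * ∑ _σ : Equiv.Perm (Fin N), ∑ i, P {x | x i ∈ A} := by
        congr 1
        exact Finset.sum_congr rfl fun σ _ => Equiv.sum_comp σ fun j => P {x | x j ∈ A}
    _ = _ := factorial_inv_mul_sum_const _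

lemma HasOneBodyDensity.symmetrize {ρ : E → ℝ} (h : HasOneBodyDensity P ρ) :
    HasOneBodyDensity (symmetrize P) ρ :=
  fun A hA => (sum_symmetrize_marginal hA).trans (h A hA)

lemma ae_symmetrize {p : (Fin N → E) → Prop} (hp : MeasurableSet {x | p x})
    (hperm : ∀ (σ : Equiv.Perm (Fin N)) x, p x → p (x ∘ σ)) (h : ∀ᵐ x ∂P, p x) :
    ∀ᵐ x ∂symmetrize P, p x := by
  rw [ae_iff, symmetrize_apply (A := {x | ¬ p x}) hp.compl]
  have hzero : ∀ σ : Equiv.Perm (Fin N), P ((· ∘ σ) ⁻¹' {x | ¬ p x}) = 0 := fun σ =>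
    measure_mono_null (fun x hx hpx => hx (hperm σ x hpx)) (ae_iff.1 h)
  rw [Finset.sum_eq_zero fun σ _ => hzero σ, mul_zero]

end Symmetrization

section Energy

variable {E : Type*} [NormedAddCommGroup E] [MeasureSpace E]

lemma interactionEnergy_eq_zero_of_ae {w : E → EReal} {N : ℕ} {P : Measure (Fin N → E)}
    (h : ∀ᵐ x ∂P, pairSum w N x = 0) : interactionEnergy w N P = 0 := by
  have hpos : ∀ᵐ x ∂P, erealPos (pairSum w N x) = 0 := h.mono fun x hx => by simp [hx, erealPos]
  have hneg : ∀ᵐ x ∂P, erealPos (-pairSum w N x) = 0 := h.mono fun x hx => by simp [hx, erealPos]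
  simp [interactionEnergy, eIntegral, lintegral_congr_ae hpos, lintegral_congr_ae hneg]

lemma pairSum_hardCore_eq_zero {r : ℝ} {N : ℕ} {x : Fin N → ℝ}
    (hx : ∀ j k, j ≠ k → r ≤ |x j - x k|) :
    pairSum (fun z : ℝ => if |z| < r then (⊤ : EReal) else 0) N x = 0 :=
  Finset.sum_eq_zero fun _ hp => if_neg (not_lt.2 (hx _ _ (Finset.mem_filter.1 hp).2.ne))

end Energy

section QuantileState

lemma separated_of_add_le {N : ℕ} {r : ℝ} {x : Fin N → ℝ}
    (h : ∀ j k, j < k → x j + r ≤ x k) : ∀ j k, j ≠ k → r ≤ |x j - x k| := by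
  intro j k hjk
  rcases hjk.lt_or_gt with hlt | hlt
  · rw [abs_sub_comm]
    exact (le_sub_iff_add_le'.2 (h j k hlt)).trans (le_abs_self _)
  · exact (le_sub_iff_add_le'.2 (h k j hlt)).trans (le_abs_self _)

lemma volume_restrict_Ioo_preimage_add_right (c : ℝ) (S : Set ℝ) :
    volume.restrict (Ioo 0 1) ((· + c) ⁻¹' S) = volume.restrict (Ioo c (c + 1)) S := by
  have h := (measurePreserving_add_right volume c).restrict_preimage_emb
    (measurableEmbedding_addRight c) (Ioo c (c + 1))
  rw [preimage_add_const_Ioo, sub_self, add_sub_cancel_left] at h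
  exact h.measure_preimage_emb (measurableEmbedding_addRight c) S

lemma sum_volume_restrict_Ioo_succ (N : ℕ) :
    ∑ i : Fin N, volume.restrict (Ioo (i : ℝ) (i + 1)) = volume.restrict (Ioo (0 : ℝ) N) := by
  simp only [Measure.restrict_congr_set Ioo_ae_eq_Ico]
  induction N with
  | zero => simp
  | succ n ih =>
    rw [Fin.sum_univ_castSucc]
    simp only [Fin.val_castSucc, Fin.val_last, ih, Nat.cast_succ]
    rw [← Measure.restrict_union Ico_disjoint_Ico_same measurableSet_Ico,
      Ico_union_Ico_eq_Ico (Nat.cast_nonneg n) (le_add_of_nonneg_right zero_le_one)]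

variable {ρ : ℝ → ℝ} {N : ℕ}

def quantileConfig (ρ : ℝ → ℝ) (N : ℕ) (t : ℝ) : Fin N → ℝ :=
  fun i => quantile ρ (t + (i : ℕ))

def quantileState (ρ : ℝ → ℝ) (N : ℕ) : Measure (Fin N → ℝ) :=
  (volume.restrict (Ioo 0 1)).map (quantileConfig ρ N)

lemma add_mem_Ioo_of_mem_Ioo {t : ℝ} (ht : t ∈ Ioo (0 : ℝ) 1) (i : Fin N) :
    t + (i : ℕ) ∈ Ioo (0 : ℝ) N := by
  have hi : ((i : ℕ) : ℝ) + 1 ≤ N := by exact_mod_cast i.isLt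
  exact ⟨by linarith [ht.1, (Nat.cast_nonneg i : (0 : ℝ) ≤ (i : ℕ))], by linarith [ht.2]⟩

variable (hρ : 0 ≤ᵐ[volume] ρ) (hint : Integrable ρ) (hmass : ∫ y, ρ y = N)
include hρ hint hmass

lemma aemeasurable_quantileConfig :
    AEMeasurable (quantileConfig ρ N) (volume.restrict (Ioo 0 1)) :=
  aemeasurable_pi_lambda _ fun i => aemeasurable_restrict_of_monotoneOn measurableSet_Ioo
    fun _ ha _ hb hab => monotoneOn_quantile hρ hint (hmass ▸ add_mem_Ioo_of_mem_Ioo ha i)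
      (hmass ▸ add_mem_Ioo_of_mem_Ioo hb i) (by simpa using hab)

lemma isProbabilityMeasure_quantileState : IsProbabilityMeasure (quantileState ρ N) :=
  haveI : IsProbabilityMeasure (volume.restrict (Ioo (0 : ℝ) 1)) := ⟨by simp⟩
  Measure.isProbabilityMeasure_map (aemeasurable_quantileConfig hρ hint hmass)

lemma hasOneBodyDensity_quantileState : HasOneBodyDensity (quantileState ρ N) ρ := by
  intro A hA
  have hT := aemeasurable_restrict_of_monotoneOn (μ := volume) measurableSet_Ioo
    (monotoneOn_quantile hρ hint)
  calc ∑ i : Fin N, quantileState ρ N {x | x i ∈ A}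
      = ∑ i : Fin N, volume.restrict (Ioo ((i : ℕ) : ℝ) ((i : ℕ) + 1)) (quantile ρ ⁻¹' A) := by
        refine Finset.sum_congr rfl fun i _ => ?_
        rw [quantileState, Measure.map_apply_of_aemeasurable (s := {x | x i ∈ A})
          (aemeasurable_quantileConfig hρ hint hmass) (measurable_pi_apply i hA)]
        exact volume_restrict_Ioo_preimage_add_right ((i : ℕ) : ℝ) (quantile ρ ⁻¹' A)
    _ = volume.restrict (Ioo 0 (∫ y, ρ y)) (quantile ρ ⁻¹' A) := by
        rw [hmass, ← sum_volume_restrict_Ioo_succ, Measure.coe_finsetSum, Finset.sum_apply]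
    _ = ∫⁻ y in A, ENNReal.ofReal (ρ y) := by
        rw [← Measure.map_apply_of_aemeasurable hT hA, map_quantile hρ hint,
          withDensity_apply _ hA]

lemma ae_separated_quantileState {r : ℝ} (hwin : ∀ x, ∫ y in Ico x (x + r), ρ y ≤ 1) :
    ∀ᵐ x ∂quantileState ρ N, ∀ j k, j ≠ k → r ≤ |x j - x k| := by
  rw [quantileState, ae_map_iff (aemeasurable_quantileConfig hρ hint hmass) (by measurability)]
  have hgood := ae_all_iff.2 fun j : ℕ =>
    (measurePreserving_add_right volume (j : ℝ)).quasiMeasurePreserving.ae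
      ((countable_setOf_quantile_gap hρ hint hwin).ae_notMem volume)
  filter_upwards [ae_restrict_mem measurableSet_Ioo, ae_restrict_of_ae hgood] with t ht htgood
  refine separated_of_add_le fun j k hjk => ?_
  have hjk' : ((j : ℕ) : ℝ) + 1 ≤ (k : ℕ) := by exact_mod_cast hjk
  have hj : t + (j : ℕ) ∈ Ioo 0 ((∫ y, ρ y) - 1) := by
    have := add_mem_Ioo_of_mem_Ioo ht k
    exact ⟨(add_mem_Ioo_of_mem_Ioo ht j).1, by rw [hmass]; linarith [this.2]⟩
  have hj1 : t + (j : ℕ) + 1 ∈ Ioo 0 (∫ y, ρ y) := ⟨by linarith [hj.1], by linarith [hj.2]⟩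
  calc quantile ρ (t + (j : ℕ)) + r ≤ quantile ρ (t + (j : ℕ) + 1) :=
        not_lt.1 fun hlt => htgood j ⟨hj, hlt⟩
    _ ≤ quantile ρ (t + (k : ℕ)) :=
        monotoneOn_quantile hρ hint hj1 (hmass ▸ add_mem_Ioo_of_mem_Ioo ht k) (by linarith)

end QuantileState

end ClDFT

theorem statement10_general (r₀ : ℝ) (N : ℕ) (ρ : ℝ → ℝ)
    (hρ : ∀ x, 0 ≤ ρ x) (hint : Integrable ρ) (hmass : ∫ x, ρ x = N)
    (hwin : ∀ x : ℝ, ∫ y in Set.Ico x (x + r₀), ρ y ≤ 1) :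
    ∃ P : Measure (Fin N → ℝ), IsProbabilityMeasure P ∧
      SymmetricState P ∧ HasOneBodyDensity P ρ ∧
      (∀ᵐ x ∂P, ∀ j k : Fin N, j ≠ k → r₀ ≤ |x j - x k|) ∧
      interactionEnergy (fun x : ℝ => if |x| < r₀ then (⊤ : EReal) else 0) N P = 0 := by
  have hρ' : 0 ≤ᵐ[volume] ρ := ae_of_all _ hρ
  have := isProbabilityMeasure_quantileState hρ' hint hmass
  have hsep : ∀ᵐ x ∂symmetrize (quantileState ρ N), ∀ j k : Fin N, j ≠ k → r₀ ≤ |x j - x k| :=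
    ae_symmetrize (by measurability) (fun σ x hx j k hjk => hx (σ j) (σ k) (σ.injective.ne hjk))
      (ae_separated_quantileState hρ' hint hmass hwin)
  exact ⟨symmetrize (quantileState ρ N), inferInstance, symmetricState_symmetrize _,
    (hasOneBodyDensity_quantileState hρ' hint hmass).symmetrize, hsep,
    interactionEnergy_eq_zero_of_ae (hsep.mono fun _ => pairSum_hardCore_eq_zero)⟩

/-- **1D hard-core representability.** -/
theorem statement10 (r₀ : ℝ) (hr₀ : 0 < r₀) (N : ℕ) (ρ : ℝ → ℝ)
    (hρ : ∀ x, 0 ≤ ρ x) (hint : Integrable ρ) (hmass : ∫ x, ρ x = N)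
    (hwin : ∀ x : ℝ, ∫ y in Set.Ico x (x + r₀), ρ y ≤ 1) :
    ∃ P : Measure (Fin N → ℝ), IsProbabilityMeasure P ∧
      SymmetricState P ∧ HasOneBodyDensity P ρ ∧
      (∀ᵐ x ∂P, ∀ j k : Fin N, j ≠ k → r₀ ≤ |x j - x k|) ∧
      interactionEnergy (fun x : ℝ => if |x| < r₀ then (⊤ : EReal) else 0) N P = 0 :=
  statement10_general r₀ N ρ hρ hint hmass hwin
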